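/- In the primal-dual rounded weighted ℓ₁-penalty method with ε* = 0, if the sequence of penalty weights {(u_n, v_n)} is bounded, then the classic ℓ₁-penalty function F_{ℓ₁}(x, c) = f(x) + c(Σᵢ |hᵢ(x)| + Σⱼ max{0, gⱼ(x)}) is globally exact. -/
import Mathlib


open Filter Topology Metric Set

/-- Smoothed absolute value: η(t, w) = t²/(2w) if |t| < w, |t| − w/2 otherwise. -/
noncomputable def eta (t w : ℝ) : ℝ := if |t| < w then t ^ 2 / (2 * w) else |t| - w / 2

/-- Smoothed positive part. -/
noncomputable def gam (t w : ℝ) : ℝ :=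
  if t ≤ 0 then 0 else if t < w then t ^ 2 / (2 * w) else t - w / 2


lemma eta_nonneg' {t w : ℝ} (hw : 0 ≤ w) : 0 ≤ eta t w := by
  unfold eta; split_ifs with hlt
  · have hw' : 0 < w := lt_of_le_of_lt (abs_nonneg t) hlt
    positivity
  · push_neg at hlt; have := abs_nonneg t; linarith

lemma eta_le_abs' {t w : ℝ} (hw : 0 ≤ w) : eta t w ≤ |t| := by
  unfold eta; split_ifs with hlt
  · have hw' : 0 < w := lt_of_le_of_lt (abs_nonneg t) hlt
    rw [div_le_iff₀ (by linarith)]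
    nlinarith [abs_nonneg t, sq_abs t]
  · linarith

lemma gam_nonneg' {t w : ℝ} (hw : 0 ≤ w) : 0 ≤ gam t w := by
  unfold gam; split_ifs with h1 h2
  · exact le_refl 0
  · have h1' : 0 < t := lt_of_not_ge h1
    have : 0 < w := lt_trans h1' h2
    positivity
  · push_neg at h1 h2; linarith

lemma gam_le_max' {t w : ℝ} (hw : 0 ≤ w) : gam t w ≤ max 0 t := by
  unfold gam; split_ifs with h1 h2
  · exact le_max_left _ _
  · push_neg at h1
    have hw' : 0 < w := lt_trans h1 h2
    refine le_trans ?_ (le_max_right _ _)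
    rw [div_le_iff₀ (by linarith)]
    nlinarith
  · push_neg at h1 h2
    refine le_trans ?_ (le_max_right _ _); linarith

lemma eta_lb' {t w W ε : ℝ} (hw0 : 0 ≤ w) (hwW : w ≤ W) (hε : 0 < ε) (ht : ε ≤ |t|) :
    min (ε / 2) (ε ^ 2 / (2 * W)) ≤ eta t w := by
  unfold eta; split_ifs with hlt
  · refine le_trans (min_le_right _ _) ?_
    have hw' : 0 < w := lt_of_le_of_lt (abs_nonneg t) hlt
    have h2 : ε ^ 2 ≤ t ^ 2 := by nlinarith [abs_nonneg t, sq_abs t]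
    exact div_le_div₀ (sq_nonneg t) h2 (by linarith) (by linarith)
  · push_neg at hlt
    exact le_trans (min_le_left _ _) (by linarith)

lemma gam_lb' {t w W ε : ℝ} (hw0 : 0 ≤ w) (hwW : w ≤ W) (hε : 0 < ε) (ht : ε ≤ t) :
    min (ε / 2) (ε ^ 2 / (2 * W)) ≤ gam t w := by
  unfold gam; split_ifs with h1 h2
  · linarith
  · refine le_trans (min_le_right _ _) ?_
    push_neg at h1
    have hw' : 0 < w := lt_trans h1 h2
    have h3 : ε ^ 2 ≤ t ^ 2 := by nlinarith
    exact div_le_div₀ (sq_nonneg t) h3 (by linarith) (by linarith)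
  · push_neg at h1 h2
    exact le_trans (min_le_left _ _) (by linarith)

lemma diff_tendsto_zero' {a : ℕ → ℝ} (hm : Monotone a) (hb : BddAbove (Set.range a)) :
    Tendsto (fun n => a (n + 1) - a n) atTop (𝓝 0) := by
  have h1 := tendsto_atTop_ciSup hm hb
  have h2 : Tendsto (fun n => a (n + 1)) atTop (𝓝 (⨆ i, a i)) :=
    h1.comp (tendsto_add_atTop_nat 1)
  simpa using h2.sub h1

/-- in the primal-dual rounded weighted ℓ₁-penalty method with ε* = 0, if
the penalty weights {(u_n, v_n)} stay bounded, then the classic ℓ₁-penalty function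
F_{ℓ₁}(x, c) = f(x) + c(Σᵢ|hᵢ(x)| + Σⱼ max{0, gⱼ(x)}) is globally exact:
for some c > 0, its global minimizers on Q coincide with the global solutions of the
constrained problem. -/
theorem rounded_weighted_penalty_exactness
    {X : Type*} [MetricSpace X] {m l : ℕ}
    (Q : Set X) (hQne : Q.Nonempty) (hQc : IsClosed Q)
    (f : X → ℝ) (h : X → Fin m → ℝ) (g : X → Fin l → ℝ)
    (hfeas : {x | x ∈ Q ∧ (∀ i, h x i = 0) ∧ ∀ j, g x j ≤ 0}.Nonempty)
    (hfb : BddBelow (f '' {x | x ∈ Q ∧ (∀ i, h x i = 0) ∧ ∀ j, g x j ≤ 0}))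
    (fstar : ℝ)
    (hfstar : fstar = sInf (f '' {x | x ∈ Q ∧ (∀ i, h x i = 0) ∧ ∀ j, g x j ≤ 0}))
    (β : (Fin m → ℝ) × (Fin l → ℝ) → ℝ)
    (hβ : β = fun y => sInf (f '' {x | x ∈ Q ∧ (∀ i, h x i = y.1 i) ∧ ∀ j, g x j ≤ y.2 j}))
    (hβlsc : fstar ≤ Filter.liminf β (𝓝[≠] (0 : (Fin m → ℝ) × (Fin l → ℝ))))
    (xs : ℕ → X) (us : ℕ → Fin m → ℝ) (vs : ℕ → Fin l → ℝ) (ws : ℕ → ℝ)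
    (ss : ℕ → ℝ) (dus : ℕ → Fin m → ℝ) (dvs : ℕ → Fin l → ℝ) (εs : ℕ → ℝ)
    (hu0 : ∀ i, 0 ≤ us 0 i) (hv0 : ∀ j, 0 ≤ vs 0 j) (hw0 : 0 < ws 0)
    (hwmono : ∀ n, ws (n + 1) ≤ ws n) (hwnn : ∀ n, 0 ≤ ws n)
    (hε0 : ∀ n, 0 ≤ εs n) (hεlim : Tendsto εs atTop (𝓝 0))
    (hspos : ∀ n, 0 < ss n) (hdu : ∀ n i, 0 ≤ dus n i) (hdv : ∀ n j, 0 ≤ dvs n j)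
    (huupd : ∀ n i, us (n + 1) i = us n i + ss n * (eta (h (xs n) i) (ws n) + dus n i))
    (hvupd : ∀ n j, vs (n + 1) j = vs n j + ss n * (gam (g (xs n) j) (ws n) + dvs n j))
    (hxQ : ∀ n, xs n ∈ Q)
    (hbdd : BddBelow ((fun x => f x + ∑ i, us 0 i * eta (h x i) (ws 0)
        + ∑ j, vs 0 j * gam (g x j) (ws 0)) '' Q))
    (hopt : ∀ n, ∀ x ∈ Q,
      f (xs n) + ∑ i, us n i * eta (h (xs n) i) (ws n)
          + ∑ j, vs n j * gam (g (xs n) j) (ws n) ≤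
        f x + ∑ i, us n i * eta (h x i) (ws n)
          + ∑ j, vs n j * gam (g x j) (ws n) + εs n)
    (hstep : (∃ sstar : ℝ, 0 < sstar ∧ ∀ n, sstar ≤ ss n) ∨
      (∃ ω : ℝ → ℝ, MonotoneOn ω (Ici 0) ∧ (∀ t, 0 ≤ ω t) ∧ (∀ t, 0 < t → 0 < ω t) ∧
        ∀ n, ω (Real.sqrt (∑ i, (eta (h (xs n) i) (ws n)) ^ 2
          + ∑ j, (gam (g (xs n) j) (ws n)) ^ 2)) ≤ ss n))
    (hbound : ∃ C : ℝ, ∀ n, (∀ i, us n i ≤ C) ∧ ∀ j, vs n j ≤ C) :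
    ∃ c : ℝ, 0 < c ∧
      {x | x ∈ Q ∧ ∀ x' ∈ Q,
          f x + c * (∑ i, |h x i| + ∑ j, max 0 (g x j)) ≤
            f x' + c * (∑ i, |h x' i| + ∑ j, max 0 (g x' j))} =
        {x | x ∈ Q ∧ (∀ i, h x i = 0) ∧ (∀ j, g x j ≤ 0) ∧
          ∀ x', x' ∈ Q → (∀ i, h x' i = 0) → (∀ j, g x' j ≤ 0) → f x ≤ f x'} := by
    classical
  obtain ⟨C, hC⟩ := hbound
  obtain ⟨B, hB⟩ := hbdd
  set c₀ : ℝ := max C 1 with hc₀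
  have hc₀pos : (0 : ℝ) < c₀ := lt_of_lt_of_le one_pos (le_max_right _ _)
  have hwanti : Antitone ws := antitone_nat_of_succ_le hwmono
  have hwle : ∀ n, ws n ≤ ws 0 := fun n => hwanti (Nat.zero_le n)
  have humono : ∀ i, Monotone fun n => us n i := by
    intro i
    apply monotone_nat_of_le_succ
    intro n
    rw [huupd n i]
    have h1 : 0 ≤ eta (h (xs n) i) (ws n) := eta_nonneg' (hwnn n)
    have h2 := hdu n i
    nlinarith [hspos n]
  have hvmono : ∀ j, Monotone fun n => vs n j := by
    intro j
    apply monotone_nat_of_le_succ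
    intro n
    rw [hvupd n j]
    have h1 : 0 ≤ gam (g (xs n) j) (ws n) := gam_nonneg' (hwnn n)
    have h2 := hdv n j
    nlinarith [hspos n]
  have hunn : ∀ n i, 0 ≤ us n i := fun n i => le_trans (hu0 i) (humono i (Nat.zero_le n))
  have hvnn : ∀ n j, 0 ≤ vs n j := fun n j => le_trans (hv0 j) (hvmono j (Nat.zero_le n))
  have huc : ∀ n i, us n i ≤ c₀ := fun n i => le_trans ((hC n).1 i) (le_max_left _ _)
  have hvc : ∀ n j, vs n j ≤ c₀ := fun n j => le_trans ((hC n).2 j) (le_max_left _ _)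
  -- s_n * eta → 0 and s_n * gam → 0
  have hsu : ∀ i, Tendsto (fun n => ss n * eta (h (xs n) i) (ws n)) atTop (𝓝 0) := by
    intro i
    have hd := diff_tendsto_zero' (humono i) ⟨c₀, by rintro x ⟨n, rfl⟩; exact huc n i⟩
    refine squeeze_zero (fun n => mul_nonneg (hspos n).le (eta_nonneg' (hwnn n))) ?_ hd
    intro n
    rw [huupd n i]
    have h1 := hdu n i
    nlinarith [hspos n]
  have hsv : ∀ j, Tendsto (fun n => ss n * gam (g (xs n) j) (ws n)) atTop (𝓝 0) := by
    intro j
    have hd := diff_tendsto_zero' (hvmono j) ⟨c₀, by rintro x ⟨n, rfl⟩; exact hvc n j⟩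
    refine squeeze_zero (fun n => mul_nonneg (hspos n).le (gam_nonneg' (hwnn n))) ?_ hd
    intro n
    rw [hvupd n j]
    have h1 := hdv n j
    nlinarith [hspos n]
  -- eta → 0, gam → 0
  have hetalim : ∀ i, Tendsto (fun n => eta (h (xs n) i) (ws n)) atTop (𝓝 0) := by
    intro i
    rcases hstep with ⟨sstar, hs1, hs2⟩ | ⟨ω, hωm, hωnn, hωpos, hωs⟩
    · refine squeeze_zero (g := fun n => ss n * eta (h (xs n) i) (ws n) / sstar)
        (fun n => eta_nonneg' (hwnn n)) ?_ ?_
      · intro n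
        rw [le_div_iff₀ hs1]
        have h1 : 0 ≤ eta (h (xs n) i) (ws n) := eta_nonneg' (hwnn n)
        nlinarith [hs2 n]
      · simpa using (hsu i).div_const sstar
    · rw [Metric.tendsto_atTop]
      intro ε hε
      have hωε : 0 < ω ε := hωpos ε hε
      have hev : ∀ᶠ n in atTop, ss n * eta (h (xs n) i) (ws n) < ω ε * ε :=
        (hsu i).eventually_lt_const (by positivity)
      obtain ⟨N, hN⟩ := eventually_atTop.mp hev
      refine ⟨N, fun n hn => ?_⟩
      rw [Real.dist_eq, sub_zero, abs_of_nonneg (eta_nonneg' (hwnn n))]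
      by_contra hcon
      push_neg at hcon
      set R := Real.sqrt (∑ i', eta (h (xs n) i') (ws n) ^ 2
        + ∑ j, gam (g (xs n) j) (ws n) ^ 2) with hR
      have hRge : ε ≤ R := by
        have h1 : eta (h (xs n) i) (ws n) ^ 2 ≤ ∑ i', eta (h (xs n) i') (ws n) ^ 2 :=
          Finset.single_le_sum (f := fun i' => eta (h (xs n) i') (ws n) ^ 2)
            (fun i' _ => sq_nonneg _) (Finset.mem_univ i)
        have h2 : (0 : ℝ) ≤ ∑ j, gam (g (xs n) j) (ws n) ^ 2 :=
          Finset.sum_nonneg fun j _ => sq_nonneg _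
        calc ε ≤ eta (h (xs n) i) (ws n) := hcon
        _ = Real.sqrt (eta (h (xs n) i) (ws n) ^ 2) :=
            (Real.sqrt_sq (eta_nonneg' (hwnn n))).symm
        _ ≤ R := Real.sqrt_le_sqrt (by linarith)
      have hsn : ω ε ≤ ss n :=
        le_trans (hωm (mem_Ici.mpr hε.le) (mem_Ici.mpr (le_trans hε.le hRge)) hRge) (hωs n)
      have hcon2 : ω ε * ε ≤ ss n * eta (h (xs n) i) (ws n) :=
        mul_le_mul hsn hcon hε.le (hspos n).le
      exact absurd (hN n hn) (not_lt.mpr hcon2)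
  have hgamlim : ∀ j, Tendsto (fun n => gam (g (xs n) j) (ws n)) atTop (𝓝 0) := by
    intro j
    rcases hstep with ⟨sstar, hs1, hs2⟩ | ⟨ω, hωm, hωnn, hωpos, hωs⟩
    · refine squeeze_zero (g := fun n => ss n * gam (g (xs n) j) (ws n) / sstar)
        (fun n => gam_nonneg' (hwnn n)) ?_ ?_
      · intro n
        rw [le_div_iff₀ hs1]
        have h1 : 0 ≤ gam (g (xs n) j) (ws n) := gam_nonneg' (hwnn n)
        nlinarith [hs2 n]
      · simpa using (hsv j).div_const sstar
    · rw [Metric.tendsto_atTop]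
      intro ε hε
      have hωε : 0 < ω ε := hωpos ε hε
      have hev : ∀ᶠ n in atTop, ss n * gam (g (xs n) j) (ws n) < ω ε * ε :=
        (hsv j).eventually_lt_const (by positivity)
      obtain ⟨N, hN⟩ := eventually_atTop.mp hev
      refine ⟨N, fun n hn => ?_⟩
      rw [Real.dist_eq, sub_zero, abs_of_nonneg (gam_nonneg' (hwnn n))]
      by_contra hcon
      push_neg at hcon
      set R := Real.sqrt (∑ i, eta (h (xs n) i) (ws n) ^ 2
        + ∑ j', gam (g (xs n) j') (ws n) ^ 2) with hR
      have hRge : ε ≤ R := by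
        have h1 : gam (g (xs n) j) (ws n) ^ 2 ≤ ∑ j', gam (g (xs n) j') (ws n) ^ 2 :=
          Finset.single_le_sum (f := fun j' => gam (g (xs n) j') (ws n) ^ 2)
            (fun j' _ => sq_nonneg _) (Finset.mem_univ j)
        have h2 : (0 : ℝ) ≤ ∑ i, eta (h (xs n) i) (ws n) ^ 2 :=
          Finset.sum_nonneg fun i _ => sq_nonneg _
        calc ε ≤ gam (g (xs n) j) (ws n) := hcon
        _ = Real.sqrt (gam (g (xs n) j) (ws n) ^ 2) :=
            (Real.sqrt_sq (gam_nonneg' (hwnn n))).symm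
        _ ≤ R := Real.sqrt_le_sqrt (by linarith)
      have hsn : ω ε ≤ ss n :=
        le_trans (hωm (mem_Ici.mpr hε.le) (mem_Ici.mpr (le_trans hε.le hRge)) hRge) (hωs n)
      have hcon2 : ω ε * ε ≤ ss n * gam (g (xs n) j) (ws n) :=
        mul_le_mul hsn hcon hε.le (hspos n).le
      exact absurd (hN n hn) (not_lt.mpr hcon2)
  -- h(x_n) → 0 and (g(x_n))⁺ → 0
  have hhlim : ∀ i, Tendsto (fun n => h (xs n) i) atTop (𝓝 0) := by
    intro i
    rw [Metric.tendsto_atTop]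
    intro ε hε
    have hδ : 0 < min (ε / 2) (ε ^ 2 / (2 * ws 0)) :=
      lt_min (by linarith) (div_pos (by positivity) (by linarith))
    obtain ⟨N, hN⟩ := eventually_atTop.mp ((hetalim i).eventually_lt_const hδ)
    refine ⟨N, fun n hn => ?_⟩
    rw [Real.dist_eq, sub_zero]
    by_contra hcon
    push_neg at hcon
    exact absurd (hN n hn) (not_lt.mpr (eta_lb' (hwnn n) (hwle n) hε hcon))
  have hglim : ∀ j, Tendsto (fun n => max 0 (g (xs n) j)) atTop (𝓝 0) := by
    intro j
    rw [Metric.tendsto_atTop]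
    intro ε hε
    have hδ : 0 < min (ε / 2) (ε ^ 2 / (2 * ws 0)) :=
      lt_min (by linarith) (div_pos (by positivity) (by linarith))
    obtain ⟨N, hN⟩ := eventually_atTop.mp ((hgamlim j).eventually_lt_const hδ)
    refine ⟨N, fun n hn => ?_⟩
    rw [Real.dist_eq, sub_zero, abs_of_nonneg (le_max_left _ _)]
    by_contra hcon
    push_neg at hcon
    have hgt : ε ≤ g (xs n) j := by
      rcases le_or_gt (g (xs n) j) 0 with hle | hlt
      · rw [max_eq_left hle] at hcon; linarith
      · rwa [max_eq_right hlt.le] at hcon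
    exact absurd (hN n hn) (not_lt.mpr (gam_lb' (hwnn n) (hwle n) hε hgt))
  set y : ℕ → (Fin m → ℝ) × (Fin l → ℝ) :=
    fun n => (h (xs n), fun j => max 0 (g (xs n) j)) with hy
  have hylim : Tendsto y atTop (𝓝 0) :=
    Tendsto.prodMk_nhds (tendsto_pi_nhds.mpr hhlim) (tendsto_pi_nhds.mpr hglim)
  -- lower bound on f over relaxed feasible sets
  have hflb : ∀ (y1 : Fin m → ℝ) (y2 : Fin l → ℝ), ∀ x ∈ Q,
      (∀ i, h x i = y1 i) → (∀ j, g x j ≤ y2 j) →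
      B - ∑ i, us 0 i * |y1 i| - ∑ j, vs 0 j * max 0 (y2 j) ≤ f x := by
    intro y1 y2 x hxQ' hh hg
    have h1 : B ≤ f x + ∑ i, us 0 i * eta (h x i) (ws 0)
        + ∑ j, vs 0 j * gam (g x j) (ws 0) := hB ⟨x, hxQ', rfl⟩
    have h2 : (0:ℝ) ≤ ∑ i, us 0 i * eta (h x i) (ws 0) + ∑ i, us 0 i * |y1 i| →
        True := fun _ => trivial
    have h3 : ∑ i, us 0 i * eta (h x i) (ws 0) ≤ ∑ i, us 0 i * |y1 i| := by
      refine Finset.sum_le_sum fun i _ => ?_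
      have he : eta (h x i) (ws 0) ≤ |y1 i| := (eta_le_abs' hw0.le).trans_eq (by rw [hh i])
      exact mul_le_mul_of_nonneg_left he (hu0 i)
    have h4 : ∑ j, vs 0 j * gam (g x j) (ws 0) ≤ ∑ j, vs 0 j * max 0 (y2 j) := by
      refine Finset.sum_le_sum fun j _ => ?_
      have hgm : gam (g x j) (ws 0) ≤ max 0 (y2 j) :=
        le_trans (gam_le_max' hw0.le) (max_le_max le_rfl (hg j))
      exact mul_le_mul_of_nonneg_left hgm (hv0 j)
    linarith
  have hβbdd : ∀ (y1 : Fin m → ℝ) (y2 : Fin l → ℝ),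
      BddBelow (f '' {x | x ∈ Q ∧ (∀ i, h x i = y1 i) ∧ ∀ j, g x j ≤ y2 j}) := by
    intro y1 y2
    refine ⟨B - ∑ i, us 0 i * |y1 i| - ∑ j, vs 0 j * max 0 (y2 j), ?_⟩
    rintro r ⟨x, ⟨hxQ', hh, hg⟩, rfl⟩
    exact hflb y1 y2 x hxQ' hh hg
  have hβle : ∀ n, β (y n) ≤ f (xs n) := by
    intro n
    rw [hβ]
    exact csInf_le (hβbdd _ _) ⟨xs n, ⟨hxQ n, fun i => rfl, fun j => le_max_right _ _⟩, rfl⟩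
  -- the set of eventual lower bounds of β near 0 is nonempty
  have hSne : Set.Nonempty {a | ∀ᶠ z in 𝓝[≠] (0 : (Fin m → ℝ) × (Fin l → ℝ)), a ≤ β z} := by
    refine ⟨min (B - ∑ i, us 0 i - ∑ j, vs 0 j) 0, ?_⟩
    have hball : Metric.ball (0 : (Fin m → ℝ) × (Fin l → ℝ)) 1 ∈
        𝓝[≠] (0 : (Fin m → ℝ) × (Fin l → ℝ)) :=
      nhdsWithin_le_nhds (Metric.ball_mem_nhds _ one_pos)
    filter_upwards [hball] with z hz
    rw [Metric.mem_ball] at hz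
    have hz1 : ∀ i, |z.1 i| ≤ 1 := by
      intro i
      have h1 : dist (z.1 i) ((0 : (Fin m → ℝ) × (Fin l → ℝ)).1 i) ≤ dist z.1 (0:(Fin m → ℝ) × (Fin l → ℝ)).1 :=
        dist_le_pi_dist z.1 _ i
      have h2 : dist z.1 ((0:(Fin m → ℝ) × (Fin l → ℝ)).1) ≤ dist z 0 := by
        rw [Prod.dist_eq]; exact le_max_left _ _
      have : |z.1 i| = dist (z.1 i) 0 := by rw [Real.dist_eq, sub_zero]
      rw [this]
      exact le_trans (le_trans h1 h2) hz.le
    have hz2 : ∀ j, max 0 (z.2 j) ≤ 1 := by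
      intro j
      refine max_le one_pos.le ?_
      have h1 : dist (z.2 j) ((0 : (Fin m → ℝ) × (Fin l → ℝ)).2 j) ≤ dist z.2 (0:(Fin m → ℝ) × (Fin l → ℝ)).2 :=
        dist_le_pi_dist z.2 _ j
      have h2 : dist z.2 ((0:(Fin m → ℝ) × (Fin l → ℝ)).2) ≤ dist z 0 := by
        rw [Prod.dist_eq]; exact le_max_right _ _
      have h3 : z.2 j ≤ |z.2 j| := le_abs_self _
      have h4 : |z.2 j| = dist (z.2 j) 0 := by rw [Real.dist_eq, sub_zero]
      calc z.2 j ≤ |z.2 j| := h3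
      _ = dist (z.2 j) 0 := h4
      _ ≤ 1 := le_trans (le_trans h1 h2) hz.le
    simp only [hβ]
    rcases Set.eq_empty_or_nonempty
        {x | x ∈ Q ∧ (∀ i, h x i = z.1 i) ∧ ∀ j, g x j ≤ z.2 j} with hemp | hne
    · rw [hemp, Set.image_empty, Real.sInf_empty]
      exact min_le_right _ _
    · refine le_csInf (hne.image f) ?_
      rintro r ⟨x, ⟨hxQ', hh, hg⟩, rfl⟩
      have hlb := hflb z.1 z.2 x hxQ' hh hg
      have h5 : ∑ i, us 0 i * |z.1 i| ≤ ∑ i, us 0 i :=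
        le_trans (Finset.sum_le_sum fun i _ =>
          mul_le_mul_of_nonneg_left (hz1 i) (hu0 i)) (by simp)
      have h6 : ∑ j, vs 0 j * max 0 (z.2 j) ≤ ∑ j, vs 0 j :=
        le_trans (Finset.sum_le_sum fun j _ =>
          mul_le_mul_of_nonneg_left (hz2 j) (hv0 j)) (by simp)
      have h7 : min (B - ∑ i, us 0 i - ∑ j, vs 0 j) 0 ≤ B - ∑ i, us 0 i - ∑ j, vs 0 j :=
        min_le_left _ _
      linarith
  -- eventual lower bound for β near 0
  have hA : ∀ δ : ℝ, 0 < δ →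
      ∀ᶠ z in 𝓝[≠] (0 : (Fin m → ℝ) × (Fin l → ℝ)), fstar - δ ≤ β z := by
    intro δ hδ
    rw [Filter.liminf_eq] at hβlsc
    by_contra hcon
    have hub : ∀ a ∈ {a | ∀ᶠ z in 𝓝[≠] (0 : (Fin m → ℝ) × (Fin l → ℝ)), a ≤ β z},
        a ≤ fstar - δ := by
      intro a ha
      by_contra ha2
      push_neg at ha2
      have ha' : ∀ᶠ z in 𝓝[≠] (0 : (Fin m → ℝ) × (Fin l → ℝ)), a ≤ β z := ha
      exact hcon (ha'.mono fun z hz => le_trans (by linarith) hz)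
    have := csSup_le hSne hub
    linarith
  -- eventually f (xs n) ≥ fstar - δ
  have hfev : ∀ δ : ℝ, 0 < δ → ∀ᶠ n in atTop, fstar - δ ≤ f (xs n) := by
    intro δ hδ
    have h1 := hA δ hδ
    rw [eventually_nhdsWithin_iff] at h1
    filter_upwards [hylim.eventually h1] with n hn
    by_cases hy0 : y n = (0 : (Fin m → ℝ) × (Fin l → ℝ))
    · have hfeasn : xs n ∈ {x | x ∈ Q ∧ (∀ i, h x i = 0) ∧ ∀ j, g x j ≤ 0} := by
        refine ⟨hxQ n, ?_, ?_⟩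
        · intro i
          have h2 : (y n).1 = 0 := by rw [hy0]; exact Prod.fst_zero
          exact congrFun h2 i
        · intro j
          have h2 : (y n).2 j = 0 := by rw [hy0]; simp
          have h3 : g (xs n) j ≤ max 0 (g (xs n) j) := le_max_right _ _
          calc g (xs n) j ≤ max 0 (g (xs n) j) := h3
          _ = (y n).2 j := rfl
          _ = 0 := h2
      have h4 : fstar ≤ f (xs n) := by
        rw [hfstar]; exact csInf_le hfb ⟨xs n, hfeasn, rfl⟩
      linarith
    · exact le_trans (hn hy0) (hβle n)
  -- per-n chain inequality
  have hchain : ∀ n, ∀ x ∈ Q,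
      f (xs n) - εs n ≤ f x + c₀ * (∑ i, |h x i| + ∑ j, max 0 (g x j)) := by
    intro n x hx
    have h1 : (0:ℝ) ≤ ∑ i, us n i * eta (h (xs n) i) (ws n) :=
      Finset.sum_nonneg fun i _ => mul_nonneg (hunn n i) (eta_nonneg' (hwnn n))
    have h2 : (0:ℝ) ≤ ∑ j, vs n j * gam (g (xs n) j) (ws n) :=
      Finset.sum_nonneg fun j _ => mul_nonneg (hvnn n j) (gam_nonneg' (hwnn n))
    have h3 := hopt n x hx
    have h4 : ∑ i, us n i * eta (h x i) (ws n) ≤ ∑ i, c₀ * |h x i| :=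
      Finset.sum_le_sum fun i _ => mul_le_mul (huc n i) (eta_le_abs' (hwnn n))
        (eta_nonneg' (hwnn n)) hc₀pos.le
    have h5 : ∑ j, vs n j * gam (g x j) (ws n) ≤ ∑ j, c₀ * max 0 (g x j) :=
      Finset.sum_le_sum fun j _ => mul_le_mul (hvc n j) (gam_le_max' (hwnn n))
        (gam_nonneg' (hwnn n)) hc₀pos.le
    rw [← Finset.mul_sum] at h4 h5
    rw [mul_add]
    linarith
  -- the key global bound
  have hkey : ∀ x ∈ Q, fstar ≤ f x + c₀ * (∑ i, |h x i| + ∑ j, max 0 (g x j)) := by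
    intro x hx
    refine le_of_forall_pos_le_add ?_
    intro ε hε
    have h1 := hfev (ε / 2) (by linarith)
    have h2 : ∀ᶠ n in atTop, εs n < ε / 2 := hεlim.eventually_lt_const (by linarith)
    obtain ⟨n, hn1, hn2⟩ := (h1.and h2).exists
    have h3 := hchain n x hx
    linarith
  -- helper facts
  have hSnn : ∀ z : X, (0:ℝ) ≤ ∑ i, |h z i| + ∑ j, max 0 (g z j) := fun z =>
    add_nonneg (Finset.sum_nonneg fun i _ => abs_nonneg _)
      (Finset.sum_nonneg fun j _ => le_max_left _ _)
  have hfeaszero : ∀ z : X, (∀ i, h z i = 0) → (∀ j, g z j ≤ 0) →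
      (∑ i, |h z i| + ∑ j, max 0 (g z j)) = 0 := by
    intro z hh hg
    have e1 : ∑ i, |h z i| = 0 := Finset.sum_eq_zero fun i _ => by rw [hh i, abs_zero]
    have e2 : ∑ j, max 0 (g z j) = 0 := Finset.sum_eq_zero fun j _ => max_eq_left (hg j)
    rw [e1, e2, add_zero]
  refine ⟨c₀ + 1, by linarith, ?_⟩
  ext x
  simp only [Set.mem_setOf_eq]
  constructor
  · rintro ⟨hxQ', hmin⟩
    have hle : f x + (c₀ + 1) * (∑ i, |h x i| + ∑ j, max 0 (g x j)) ≤ fstar := by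
      rw [hfstar]
      refine le_csInf (hfeas.image f) ?_
      rintro r ⟨x', ⟨hx'Q, hh', hg'⟩, rfl⟩
      have h1 := hmin x' hx'Q
      rw [hfeaszero x' hh' hg'] at h1
      simpa using h1
    have hge := hkey x hxQ'
    have hS0 : (∑ i, |h x i| + ∑ j, max 0 (g x j)) = 0 := by
      have h1 := hSnn x
      nlinarith
    have hs1nn : (0:ℝ) ≤ ∑ i, |h x i| := Finset.sum_nonneg fun i _ => abs_nonneg _
    have hs2nn : (0:ℝ) ≤ ∑ j, max 0 (g x j) := Finset.sum_nonneg fun j _ => le_max_left _ _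
    have e1 : ∑ i, |h x i| = 0 := by linarith
    have e2 : ∑ j, max 0 (g x j) = 0 := by linarith
    have hh0 : ∀ i, h x i = 0 := by
      intro i
      have := (Finset.sum_eq_zero_iff_of_nonneg fun i' (_ : i' ∈ Finset.univ) =>
        abs_nonneg (h x i')).mp e1 i (Finset.mem_univ i)
      exact abs_eq_zero.mp this
    have hg0 : ∀ j, g x j ≤ 0 := by
      intro j
      have := (Finset.sum_eq_zero_iff_of_nonneg fun j' (_ : j' ∈ Finset.univ) =>
        le_max_left (0:ℝ) (g x j')).mp e2 j (Finset.mem_univ j)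
      calc g x j ≤ max 0 (g x j) := le_max_right _ _
      _ = 0 := this
    refine ⟨hxQ', hh0, hg0, ?_⟩
    intro x' hx'Q hh' hg'
    have h1 := hmin x' hx'Q
    rw [hfeaszero x' hh' hg', hfeaszero x hh0 hg0] at h1
    simpa using h1
  · rintro ⟨hxQ', hh, hg, hopt'⟩
    refine ⟨hxQ', ?_⟩
    intro x' hx'
    have hSx : (∑ i, |h x i| + ∑ j, max 0 (g x j)) = 0 := hfeaszero x hh hg
    have h1 : f x ≤ fstar := by
      rw [hfstar]
      refine le_csInf (hfeas.image f) ?_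
      rintro r ⟨x'', ⟨hx''Q, hh'', hg''⟩, rfl⟩
      exact hopt' x'' hx''Q hh'' hg''
    have h2 := hkey x' hx'
    have h3 := hSnn x'
    rw [hSx]
    nlinarith
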